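/- arXiv:2102.08533 — 6 statements merged into one kernel-verified Lean document; each statement's English description precedes it below -/
import Mathlib

section
/- Let E be a real inner product space, let h : E → ℝ and φ : E → ℝ be differentiable functions such that the gradients satisfy ⟪∇φ(x), ∇h(x)⟫ = 0 for every x ∈ E. Fix c ∈ ℝ and let t : ℝ → E be a curve such that for every s ≥ 0, t is differentiable at s with derivative t'(s) = −2·(h(t(s)) − c) • ∇h(t(s)) (the gradient flow of x ↦ (h(x) − c)²). Then φ(t(s)) = φ(t(0)) for all s ≥ 0; i.e., the conditional-effect function φ is invariant along the gradient flow used by Level-set Orthogonal Descent Estimation. -/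
open scoped RealInnerProductSpace

/-- The conditional-effect function `φ` is invariant along the gradient flow of
`x ↦ (h x - c)²` when the gradients of `φ` and `h` are everywhere orthogonal. -/
theorem lode_gradient_flow_invariance
    {E : Type*} [NormedAddCommGroup E] [InnerProductSpace ℝ E] [CompleteSpace E]
    (h φ : E → ℝ) (gh gφ : E → E)
    (hgrad_h : ∀ x, HasGradientAt h (gh x) x)
    (hgrad_φ : ∀ x, HasGradientAt φ (gφ x) x)
    (horth : ∀ x, ⟪gφ x, gh x⟫ = 0)
    (c : ℝ) (t : ℝ → E)
    (hflow : ∀ s : ℝ, 0 ≤ s →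
      HasDerivAt t ((-(2 * (h (t s) - c))) • gh (t s)) s) :
    ∀ s : ℝ, 0 ≤ s → φ (t s) = φ (t 0) := by
  intro s hs
  have hderiv : ∀ u : ℝ, 0 ≤ u → HasDerivAt (φ ∘ t) 0 u := by
    intro u hu
    have ht := hflow u hu
    have hφ' := (hgrad_φ (t u)).hasFDerivAt
    have := hφ'.comp_hasDerivAt u ht
    have hval : (InnerProductSpace.toDual ℝ E (gφ (t u)))
        ((-(2 * (h (t u) - c))) • gh (t u)) = 0 := by
      simp [InnerProductSpace.toDual_apply_apply, real_inner_smul_right, horth]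
    rwa [hval] at this
  have key := constant_of_has_deriv_right_zero
    (f := φ ∘ t) (a := 0) (b := s)
    (fun u hu => (hderiv u hu.1).continuousAt.continuousWithinAt)
    (fun u hu => (hderiv u hu.1).hasDerivWithinAt)
  exact key s ⟨hs, le_refl s⟩
end

section
/- Let E be a real inner product space, let h : E → ℝ be differentiable, fix c ∈ ℝ, and let φ : E × ℝ → ℝ be such that x ↦ φ(x, c) is differentiable with ⟪∇ₓφ(x, c), ∇h(x)⟫ = 0 for every x ∈ E, and x ↦ φ(x, c) is continuous. Let t : ℝ → E satisfy, for every s ≥ 0, t'(s) = −2·(h(t(s)) − c) • ∇h(t(s)), let t(0) = t*, and suppose the limit t' := lim_{s→∞} t(s) exists and satisfies h(t') = c. Then φ(t*, c) = φ(t', c) = φ(t', h(t')). In particular, the regression function m : E → ℝ defined by m(x) = φ(x, h(x)) satisfies m(t') = φ(t*, c), i.e., the conditional effect φ(t*, c) is identified by the value of the regression function at the surrogate intervention t'. -/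
open scoped RealInnerProductSpace
open Filter Set Topology

/-!
Along the flow the velocity is a multiple of `∇h`, which is orthogonal to `∇ₓφ(·, c)`, so by the
chain rule `s ↦ φ(t(s), c)` has zero derivative and is constant on `[0, ∞)`. Continuity of
`φ(·, c)` at the limit `t'` then gives `φ(t*, c) = φ(t', c)`, and `h(t') = c` turns this into
`φ(t', h(t'))`.
-/

theorem eq_apply_zero_of_hasDerivAt_zero {F : Type*} [NormedAddCommGroup F] [NormedSpace ℝ F]
    {f : ℝ → F} (hf : ∀ s, 0 ≤ s → HasDerivAt f 0 s) {s : ℝ} (hs : 0 ≤ s) : f s = f 0 :=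
  constant_of_has_deriv_right_zero
    (fun x hx => (hf x hx.1).continuousAt.continuousWithinAt)
    (fun x hx => (hf x hx.1).hasDerivWithinAt) s (right_mem_Icc.mpr hs)

theorem eq_of_tendsto_of_eq_apply_zero {X : Type*} [TopologicalSpace X] [T2Space X]
    {f : ℝ → X} {l : X} (hf : Tendsto f atTop (𝓝 l)) (hconst : ∀ s, 0 ≤ s → f s = f 0) :
    f 0 = l :=
  tendsto_const_nhds_iff.mp <|
    hf.congr' (eventually_atTop.mpr ⟨0, fun s hs => hconst s hs⟩)

section

variable {E : Type*} [NormedAddCommGroup E] [InnerProductSpace ℝ E] [CompleteSpace E]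

theorem HasGradientAt.comp_hasDerivAt {ψ : E → ℝ} {g : E} {γ : ℝ → E} {v : E} {s : ℝ}
    (hψ : HasGradientAt ψ g (γ s)) (hγ : HasDerivAt γ v s) :
    HasDerivAt (ψ ∘ γ) ⟪g, v⟫ s := by
  simpa using hψ.hasFDerivAt.comp_hasDerivAt s hγ

theorem apply_eq_of_inner_gradient_velocity_eq_zero {ψ : E → ℝ} {g : ℝ → E} {γ v : ℝ → E}
    (hψ : ∀ s, 0 ≤ s → HasGradientAt ψ (g s) (γ s)) (hγ : ∀ s, 0 ≤ s → HasDerivAt γ (v s) s)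
    (horth : ∀ s, 0 ≤ s → ⟪g s, v s⟫ = 0) {s : ℝ} (hs : 0 ≤ s) : ψ (γ s) = ψ (γ 0) :=
  eq_apply_zero_of_hasDerivAt_zero (f := ψ ∘ γ)
    (fun r hr => horth r hr ▸ (hψ r hr).comp_hasDerivAt (hγ r hr)) hs

theorem apply_limit_eq_of_inner_gradient_velocity_eq_zero {ψ : E → ℝ} {g : ℝ → E}
    {γ v : ℝ → E} {x : E} (hψ : ∀ s, 0 ≤ s → HasGradientAt ψ (g s) (γ s))
    (hγ : ∀ s, 0 ≤ s → HasDerivAt γ (v s) s) (horth : ∀ s, 0 ≤ s → ⟪g s, v s⟫ = 0)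
    (hcont : ContinuousAt ψ x) (hlim : Tendsto γ atTop (𝓝 x)) : ψ (γ 0) = ψ x :=
  eq_of_tendsto_of_eq_apply_zero (f := ψ ∘ γ) (hcont.tendsto.comp hlim)
    (fun _ hs => apply_eq_of_inner_gradient_velocity_eq_zero hψ hγ horth hs)

end

theorem lode_identification_general
    {E : Type*} [NormedAddCommGroup E] [InnerProductSpace ℝ E] [CompleteSpace E]
    (h : E → ℝ) (gh : E → E)
    (c : ℝ) (φ : E → ℝ → ℝ) (gφ : E → E)
    (hgrad_φ : ∀ x, HasGradientAt (fun y => φ y c) (gφ x) x)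
    (horth : ∀ x, ⟪gφ x, gh x⟫ = 0)
    (t : ℝ → E)
    (hflow : ∀ s : ℝ, 0 ≤ s →
      HasDerivAt t ((-(2 * (h (t s) - c))) • gh (t s)) s)
    (t' : E) (hlim : Filter.Tendsto t Filter.atTop (nhds t'))
    (hconf : h t' = c) :
    φ (t 0) c = φ t' c ∧ φ t' c = φ t' (h t') ∧
      (fun x => φ x (h x)) t' = φ (t 0) c := by
  have horth_flow : ∀ s, 0 ≤ s →
      ⟪gφ (t s), (-(2 * (h (t s) - c))) • gh (t s)⟫ = 0 := fun s _ => by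
    rw [real_inner_smul_right, horth, mul_zero]
  have hconserved : φ (t 0) c = φ t' c :=
    apply_limit_eq_of_inner_gradient_velocity_eq_zero (fun s _ => hgrad_φ (t s)) hflow
      horth_flow (hgrad_φ t').differentiableAt.continuousAt hlim
  refine ⟨hconserved, by rw [hconf], ?_⟩
  change φ t' (h t') = _
  rw [hconf, hconserved]

/-- Identification of the conditional effect `φ(t*, c)` via the surrogate intervention
`t'` obtained as the limit of the gradient flow of `x ↦ (h x - c)²`, under the
C-red orthogonality condition stated at the level of the conditional effect. -/
theorem lode_identification
    {E : Type*} [NormedAddCommGroup E] [InnerProductSpace ℝ E] [CompleteSpace E]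
    (h : E → ℝ) (gh : E → E)
    (hgrad_h : ∀ x, HasGradientAt h (gh x) x)
    (c : ℝ) (φ : E → ℝ → ℝ) (gφ : E → E)
    (hgrad_φ : ∀ x, HasGradientAt (fun y => φ y c) (gφ x) x)
    (horth : ∀ x, ⟪gφ x, gh x⟫ = 0)
    (hcont : Continuous fun x => φ x c)
    (t : ℝ → E)
    (hflow : ∀ s : ℝ, 0 ≤ s →
      HasDerivAt t ((-(2 * (h (t s) - c))) • gh (t s)) s)
    (t' : E) (hlim : Filter.Tendsto t Filter.atTop (nhds t'))
    (hconf : h t' = c) :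
    φ (t 0) c = φ t' c ∧ φ t' c = φ t' (h t') ∧
      (fun x => φ x (h x)) t' = φ (t 0) c :=
  lode_identification_general h gh c φ gφ hgrad_φ horth t hflow t' hlim hconf
end

section
/- Let E be a real inner product space, h : E → ℝ and φ : E → ℝ differentiable, and let σ, L_h, M, ℓ ≥ 0 and c ∈ ℝ. Assume: (i) ⟪∇φ(x), ∇h(x)⟫ = 0 for all x ∈ E; (ii) for all x, y ∈ E, |φ(y) − φ(x) − ⟪∇φ(x), y − x⟫| ≤ (σ/2)·‖y − x‖² (second-order Taylor bound, as implied by a Hessian operator-norm bound σ); and (iii) ‖∇h(x)‖ ≤ L_h for all x. If x ∈ E satisfies (h(x) − c)² ≤ M, and x' := x − 2ℓ·(h(x) − c) • ∇h(x) is one Euler step of step size ℓ on the objective (h(·) − c)², then |φ(x') − φ(x)| ≤ 2·ℓ²·M·σ·L_h². -/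
open scoped RealInnerProductSpace

/-- Single Euler step error bound: one gradient-descent step of size `ℓ` on the
confounder-mismatch objective `x ↦ (h x - c)²` changes the conditional effect `φ`
by at most `2 ℓ² M σ L_h²`, under the C-red orthogonality condition. -/
theorem lode_single_euler_step_error
    {E : Type*} [NormedAddCommGroup E] [InnerProductSpace ℝ E] [CompleteSpace E]
    (h φ : E → ℝ) (gh gφ : E → E)
    (hgrad_h : ∀ x, HasGradientAt h (gh x) x)
    (hgrad_φ : ∀ x, HasGradientAt φ (gφ x) x)
    (σ Lh M ℓ : ℝ) (hσ : 0 ≤ σ) (hLh : 0 ≤ Lh) (hM : 0 ≤ M) (hℓ : 0 ≤ ℓ)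
    (c : ℝ)
    (horth : ∀ x, ⟪gφ x, gh x⟫ = 0)
    (htaylor : ∀ x y, |φ y - φ x - ⟪gφ x, y - x⟫| ≤ σ / 2 * ‖y - x‖ ^ 2)
    (hgh_bound : ∀ x, ‖gh x‖ ≤ Lh)
    (x : E) (hmismatch : (h x - c) ^ 2 ≤ M) :
    |φ (x - (2 * ℓ * (h x - c)) • gh x) - φ x| ≤ 2 * ℓ ^ 2 * M * σ * Lh ^ 2 := by
  set s := 2 * ℓ * (h x - c) with hs
  set y := x - s • gh x with hy
  have hyx : y - x = (-s) • gh x := by simp [hy, neg_smul]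
  have hinner : ⟪gφ x, y - x⟫ = 0 := by
    rw [hyx, real_inner_smul_right, horth x, mul_zero]
  have hb := htaylor x y
  rw [hinner, sub_zero] at hb
  refine hb.trans ?_
  have hnorm : ‖y - x‖ ^ 2 = s ^ 2 * ‖gh x‖ ^ 2 := by
    rw [hyx, norm_smul, mul_pow, norm_neg, Real.norm_eq_abs, sq_abs]
  rw [hnorm]
  have h1 : s ^ 2 = 4 * ℓ ^ 2 * (h x - c) ^ 2 := by ring
  have h2 : ‖gh x‖ ^ 2 ≤ Lh ^ 2 := by
    exact pow_le_pow_left₀ (norm_nonneg _) (hgh_bound x) 2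
  have h3 : s ^ 2 * ‖gh x‖ ^ 2 ≤ (4 * ℓ ^ 2 * M) * Lh ^ 2 := by
    apply mul_le_mul _ h2 (by positivity) (by positivity)
    rw [h1]
    have : 0 ≤ ℓ ^ 2 := by positivity
    nlinarith
  calc σ / 2 * (s ^ 2 * ‖gh x‖ ^ 2) ≤ σ / 2 * ((4 * ℓ ^ 2 * M) * Lh ^ 2) := by
        exact mul_le_mul_of_nonneg_left h3 (by positivity)
    _ = 2 * ℓ ^ 2 * M * σ * Lh ^ 2 := by ring
end

section
/- Let E be a real inner product space, h : E → ℝ and φ : E → ℝ differentiable, and let σ, L_h, M, ℓ ≥ 0, c ∈ ℝ, K ∈ ℕ. Assume: (i) ⟪∇φ(x), ∇h(x)⟫ = 0 for all x ∈ E; (ii) for all x, y ∈ E, |φ(y) − φ(x) − ⟪∇φ(x), y − x⟫| ≤ (σ/2)·‖y − x‖²; and (iii) ‖∇h(x)‖ ≤ L_h for all x. Let t₀, t₁, …, t_K ∈ E be the Euler iterates t_{i+1} = t_i − 2ℓ·(h(t_i) − c) • ∇h(t_i) for 0 ≤ i < K, and suppose the maximum confounder mismatch satisfies (h(t_i) −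 c)² ≤ M for all 0 ≤ i < K. Then |φ(t_K) − φ(t₀)| ≤ 2·K·ℓ²·M·σ·L_h². -/
open scoped RealInnerProductSpace

/-- Accumulated Euler integration error over `K` steps: `K` gradient-descent steps of
size `ℓ` on the confounder-mismatch objective `x ↦ (h x - c)²` change the conditional
effect `φ` by at most `2 K ℓ² M σ L_h²`, under the C-red orthogonality condition. -/
theorem lode_euler_accumulated_error
    {E : Type*} [NormedAddCommGroup E] [InnerProductSpace ℝ E] [CompleteSpace E]
    (h φ : E → ℝ) (gh gφ : E → E)
    (hgrad_h : ∀ x, HasGradientAt h (gh x) x)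
    (hgrad_φ : ∀ x, HasGradientAt φ (gφ x) x)
    (σ Lh M ℓ : ℝ) (hσ : 0 ≤ σ) (hLh : 0 ≤ Lh) (hM : 0 ≤ M) (hℓ : 0 ≤ ℓ)
    (c : ℝ) (K : ℕ)
    (horth : ∀ x, ⟪gφ x, gh x⟫ = 0)
    (htaylor : ∀ x y, |φ y - φ x - ⟪gφ x, y - x⟫| ≤ σ / 2 * ‖y - x‖ ^ 2)
    (hgh_bound : ∀ x, ‖gh x‖ ≤ Lh)
    (t : ℕ → E)
    (hiter : ∀ i < K, t (i + 1) = t i - (2 * ℓ * (h (t i) - c)) • gh (t i))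
    (hmismatch : ∀ i < K, (h (t i) - c) ^ 2 ≤ M) :
    |φ (t K) - φ (t 0)| ≤ 2 * K * ℓ ^ 2 * M * σ * Lh ^ 2 := by
  -- per-step bound
  have step : ∀ i < K, |φ (t (i+1)) - φ (t i)| ≤ 2 * ℓ ^ 2 * M * σ * Lh ^ 2 := by
    intro i hi
    have hd : t (i+1) - t i = -((2 * ℓ * (h (t i) - c)) • gh (t i)) := by
      rw [hiter i hi]; abel
    have hinner : ⟪gφ (t i), t (i+1) - t i⟫ = 0 := by
      rw [hd, inner_neg_right, inner_smul_right, horth]; ring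
    have := htaylor (t i) (t (i+1))
    rw [hinner, sub_zero] at this
    refine this.trans ?_
    have hnorm : ‖t (i+1) - t i‖ ^ 2 = (2 * ℓ) ^ 2 * (h (t i) - c) ^ 2 * ‖gh (t i)‖ ^ 2 := by
      rw [hd, norm_neg, norm_smul]
      rw [Real.norm_eq_abs]
      rw [mul_pow, sq_abs]
      ring
    rw [hnorm]
    have h1 : (h (t i) - c) ^ 2 ≤ M := hmismatch i hi
    have h2 : ‖gh (t i)‖ ^ 2 ≤ Lh ^ 2 := by
      exact pow_le_pow_left₀ (norm_nonneg _) (hgh_bound _) 2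
    have h3 : (h (t i) - c) ^ 2 * ‖gh (t i)‖ ^ 2 ≤ M * Lh ^ 2 :=
      mul_le_mul h1 h2 (sq_nonneg _) hM
    calc σ / 2 * ((2 * ℓ) ^ 2 * (h (t i) - c) ^ 2 * ‖gh (t i)‖ ^ 2)
        = σ / 2 * (2 * ℓ) ^ 2 * ((h (t i) - c) ^ 2 * ‖gh (t i)‖ ^ 2) := by ring
      _ ≤ σ / 2 * (2 * ℓ) ^ 2 * (M * Lh ^ 2) := by
          apply mul_le_mul_of_nonneg_left h3
          positivity
      _ = 2 * ℓ ^ 2 * M * σ * Lh ^ 2 := by ring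
  -- accumulate
  have acc : ∀ n ≤ K, |φ (t n) - φ (t 0)| ≤ 2 * n * ℓ ^ 2 * M * σ * Lh ^ 2 := by
    intro n hn
    induction n with
    | zero => simp
    | succ m ih =>
      have hm : m < K := hn
      have ihm := ih (le_of_lt hm)
      have hs := step m hm
      calc |φ (t (m+1)) - φ (t 0)|
          ≤ |φ (t (m+1)) - φ (t m)| + |φ (t m) - φ (t 0)| := abs_sub_le _ _ _
        _ ≤ 2 * ℓ ^ 2 * M * σ * Lh ^ 2 + 2 * m * ℓ ^ 2 * M * σ * Lh ^ 2 := add_le_add hs ihm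
        _ = 2 * (m+1 : ℕ) * ℓ ^ 2 * M * σ * Lh ^ 2 := by push_cast; ring
  exact acc K le_rfl
end

section
/- (Error bound for Level-set Orthogonal Descent Estimation.) Let E be a real inner product space, h : E → ℝ differentiable, φ : E × ℝ → ℝ, f̂ : E → ℝ, and constants c_N, L_z, L_e, σ, L_h, M, ℓ ≥ 0, c ∈ ℝ, K ∈ ℕ. Assume: (i) |f̂(x) − φ(x, h(x))| ≤ c_N for all x ∈ E (bounded outcome-model error); (ii) x ↦ φ(x, c) is differentiable with ⟪∇ₓφ(x, c), ∇h(x)⟫ = 0 for all x, and |φ(y, c) − φ(x, c) − ⟪∇ₓφ(x, c), y − x⟫| ≤ (σ/2)‖y − x‖² for all x, y (Hessian bound σ); (iii) ‖∇h(x)‖ ≤ L_h for all x; (iv) let t₀, …, t_K be the Euler iterates t_{i+1} = t_i − 2ℓ(h(t_i) − c) • ∇h(t_i), with (h(t_i) − c)² ≤ M for all i < K; (v) z ↦ φ(t_K, z) is L_z-Lipschitz; (vi) x ↦ φ(x, h(x)) is L_e-Lipschitz; and (vii) there exists a true surrogate t' ∈ E with h(t') = c and φ(t', c) = φ(t₀,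 c). Then the conditional-effect estimation error satisfies |f̂(t_K) − φ(t₀, c)| ≤ c_N + min( L_e·‖t' − t_K‖ , 2·K·ℓ²·M·σ·L_h² + L_z·|h(t_K) − c| ). -/
open scoped RealInnerProductSpace

/-! Each Euler step moves along `∇h`, which is orthogonal to `∇ₓφ(·, c)`, so the first-order
term of the Taylor expansion of `φ(·, c)` vanishes and one step changes `φ(·, c)` by at most
`σ/2` times the squared step length, i.e. by `2ℓ²Mσ L_h²`. Summed over `K` steps this bounds
`|φ(t_K, c) - φ(t₀, c)|`, and the Lipschitz bound in the confounder value accounts for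
`h(t_K) ≠ c`. Independently, `φ(t₀, c) = φ(t', h t')`, so the Lipschitz bound of the
regression function compares `t_K` with the true surrogate directly. -/

section

variable {E : Type*} [NormedAddCommGroup E] [InnerProductSpace ℝ E]

theorem abs_sub_le_of_taylor_of_inner_eq_zero {f : E → ℝ} {g x v : E} {σ a : ℝ}
    (htaylor :
      |f (x - a • v) - f x - ⟪g, x - a • v - x⟫| ≤ σ / 2 * ‖x - a • v - x‖ ^ 2)
    (horth : ⟪g, v⟫ = 0) :
    |f (x - a • v) - f x| ≤ σ / 2 * (a ^ 2 * ‖v‖ ^ 2) := by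
  have hstep : x - a • v - x = -(a • v) := by abel
  rwa [hstep, inner_neg_right, real_inner_smul_right, horth, mul_zero, neg_zero, sub_zero,
    norm_neg, norm_smul, Real.norm_eq_abs, mul_pow, sq_abs] at htaylor

theorem abs_sub_le_mul_of_abs_succ_sub_le {u : ℕ → ℝ} {B : ℝ} {K : ℕ}
    (hstep : ∀ i < K, |u (i + 1) - u i| ≤ B) : |u K - u 0| ≤ K * B := by
  have := dist_le_range_sum_of_dist_le (f := u) K (d := fun _ => B) fun hi => by
    rw [dist_comm, Real.dist_eq]
    exact hstep _ hi
  rwa [dist_comm, Real.dist_eq, Finset.sum_const, Finset.card_range, nsmul_eq_mul] at this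

theorem abs_sub_le_of_orthogonal_descent {f h : E → ℝ} {g gh : E → E} {t : ℕ → E}
    {σ Lh M ℓ c : ℝ} {K : ℕ} (hσ : 0 ≤ σ)
    (horth : ∀ x, ⟪g x, gh x⟫ = 0)
    (htaylor : ∀ x y, |f y - f x - ⟪g x, y - x⟫| ≤ σ / 2 * ‖y - x‖ ^ 2)
    (hgh_bound : ∀ x, ‖gh x‖ ≤ Lh)
    (hiter : ∀ i < K, t (i + 1) = t i - (2 * ℓ * (h (t i) - c)) • gh (t i))
    (hmismatch : ∀ i < K, (h (t i) - c) ^ 2 ≤ M) :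
    |f (t K) - f (t 0)| ≤ K * (2 * ℓ ^ 2 * M * σ * Lh ^ 2) := by
  refine abs_sub_le_mul_of_abs_succ_sub_le (u := fun i => f (t i)) fun i hi => ?_
  rw [hiter i hi]
  refine (abs_sub_le_of_taylor_of_inner_eq_zero (htaylor _ _) (horth _)).trans ?_
  have hM : 0 ≤ M := (sq_nonneg _).trans (hmismatch i hi)
  calc σ / 2 * ((2 * ℓ * (h (t i) - c)) ^ 2 * ‖gh (t i)‖ ^ 2)
      = σ / 2 * (2 * ℓ) ^ 2 * ((h (t i) - c) ^ 2 * ‖gh (t i)‖ ^ 2) := by ring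
    _ ≤ σ / 2 * (2 * ℓ) ^ 2 * (M * Lh ^ 2) := by
      gcongr
      · exact hmismatch i hi
      · exact hgh_bound _
    _ = 2 * ℓ ^ 2 * M * σ * Lh ^ 2 := by ring

end

theorem lode_error_bound_general
    {E : Type*} [NormedAddCommGroup E] [InnerProductSpace ℝ E]
    (h : E → ℝ) (gh : E → E)
    (φ : E → ℝ → ℝ) (fhat : E → ℝ)
    (cN Lz Le σ Lh M ℓ : ℝ)
    (hσ : 0 ≤ σ)
    (c : ℝ) (K : ℕ)
    -- (i) bounded outcome-model error
    (herr : ∀ x, |fhat x - φ x (h x)| ≤ cN)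
    -- (ii) C-red orthogonality and Hessian (second-order Taylor) bound at confounder value c
    (gφ : E → E)
    (horth : ∀ x, ⟪gφ x, gh x⟫ = 0)
    (htaylor : ∀ x y, |φ y c - φ x c - ⟪gφ x, y - x⟫| ≤ σ / 2 * ‖y - x‖ ^ 2)
    -- (iii) bounded gradient of h
    (hgh_bound : ∀ x, ‖gh x‖ ≤ Lh)
    -- (iv) Euler iterates with bounded confounder mismatch
    (t : ℕ → E)
    (hiter : ∀ i < K, t (i + 1) = t i - (2 * ℓ * (h (t i) - c)) • gh (t i))
    (hmismatch : ∀ i < K, (h (t i) - c) ^ 2 ≤ M)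
    -- (v) Lipschitzness of φ(t_K, ·) in the confounder value
    (hLipz : ∀ z₁ z₂ : ℝ, |φ (t K) z₁ - φ (t K) z₂| ≤ Lz * |z₁ - z₂|)
    -- (vi) Lipschitzness of the regression function x ↦ φ(x, h x)
    (hLipe : ∀ x y : E, |φ x (h x) - φ y (h y)| ≤ Le * ‖x - y‖)
    -- (vii) existence of a true surrogate
    (t' : E) (ht'conf : h t' = c) (ht'eff : φ t' c = φ (t 0) c) :
    |fhat (t K) - φ (t 0) c| ≤
      cN + min (Le * ‖t' - t K‖)
        (2 * K * ℓ ^ 2 * M * σ * Lh ^ 2 + Lz * |h (t K) - c|) := by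
  have hsurrogate : |φ (t K) (h (t K)) - φ (t 0) c| ≤ Le * ‖t' - t K‖ := by
    rw [← ht'eff, ← ht'conf, norm_sub_rev]
    exact hLipe _ _
  have hdescent : |φ (t K) (h (t K)) - φ (t 0) c| ≤
      2 * K * ℓ ^ 2 * M * σ * Lh ^ 2 + Lz * |h (t K) - c| := by
    have hdrift := abs_sub_le_of_orthogonal_descent hσ horth htaylor hgh_bound hiter hmismatch
    calc |φ (t K) (h (t K)) - φ (t 0) c|
        ≤ |φ (t K) (h (t K)) - φ (t K) c| + |φ (t K) c - φ (t 0) c| := abs_sub_le _ _ _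
      _ ≤ Lz * |h (t K) - c| + K * (2 * ℓ ^ 2 * M * σ * Lh ^ 2) :=
        add_le_add (hLipz _ _) hdrift
      _ = _ := by ring
  calc |fhat (t K) - φ (t 0) c|
      ≤ |fhat (t K) - φ (t K) (h (t K))| + |φ (t K) (h (t K)) - φ (t 0) c| :=
        abs_sub_le _ _ _
    _ ≤ cN + min (Le * ‖t' - t K‖) (2 * K * ℓ ^ 2 * M * σ * Lh ^ 2 + Lz * |h (t K) - c|) :=
      add_le_add (herr _) (le_min hsurrogate hdescent)

/-- Error bound for Level-set Orthogonal Descent Estimation: the conditional-effect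
estimation error of the estimate `f̂(t_K)` at the surrogate obtained by `K` Euler steps
is bounded by the outcome-model error `c_N` plus the minimum of a direct Lipschitz
bound and the accumulated-Euler-error plus confounder-mismatch bound. -/
theorem lode_error_bound
    {E : Type*} [NormedAddCommGroup E] [InnerProductSpace ℝ E] [CompleteSpace E]
    (h : E → ℝ) (gh : E → E)
    (hgrad_h : ∀ x, HasGradientAt h (gh x) x)
    (φ : E → ℝ → ℝ) (fhat : E → ℝ)
    (cN Lz Le σ Lh M ℓ : ℝ)
    (hcN : 0 ≤ cN) (hLz : 0 ≤ Lz) (hLe : 0 ≤ Le) (hσ : 0 ≤ σ)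
    (hLh : 0 ≤ Lh) (hM : 0 ≤ M) (hℓ : 0 ≤ ℓ)
    (c : ℝ) (K : ℕ)
    -- (i) bounded outcome-model error
    (herr : ∀ x, |fhat x - φ x (h x)| ≤ cN)
    -- (ii) C-red orthogonality and Hessian (second-order Taylor) bound at confounder value c
    (gφ : E → E)
    (hgrad_φ : ∀ x, HasGradientAt (fun y => φ y c) (gφ x) x)
    (horth : ∀ x, ⟪gφ x, gh x⟫ = 0)
    (htaylor : ∀ x y, |φ y c - φ x c - ⟪gφ x, y - x⟫| ≤ σ / 2 * ‖y - x‖ ^ 2)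
    -- (iii) bounded gradient of h
    (hgh_bound : ∀ x, ‖gh x‖ ≤ Lh)
    -- (iv) Euler iterates with bounded confounder mismatch
    (t : ℕ → E)
    (hiter : ∀ i < K, t (i + 1) = t i - (2 * ℓ * (h (t i) - c)) • gh (t i))
    (hmismatch : ∀ i < K, (h (t i) - c) ^ 2 ≤ M)
    -- (v) Lipschitzness of φ(t_K, ·) in the confounder value
    (hLipz : ∀ z₁ z₂ : ℝ, |φ (t K) z₁ - φ (t K) z₂| ≤ Lz * |z₁ - z₂|)
    -- (vi) Lipschitzness of the regression function x ↦ φ(x, h x)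
    (hLipe : ∀ x y : E, |φ x (h x) - φ y (h y)| ≤ Le * ‖x - y‖)
    -- (vii) existence of a true surrogate
    (t' : E) (ht'conf : h t' = c) (ht'eff : φ t' c = φ (t 0) c) :
    |fhat (t K) - φ (t 0) c| ≤
      cN + min (Le * ‖t' - t K‖)
        (2 * K * ℓ ^ 2 * M * σ * Lh ^ 2 + Lz * |h (t K) - c|) :=
  lode_error_bound_general h gh φ fhat cN Lz Le σ Lh M ℓ hσ c K herr gφ horth htaylor hgh_bound t
    hiter hmismatch hLipz hLipe t' ht'conf ht'eff
end

section
/- (Necessity of Effect Connectivity: non-identifiability construction.) Let μ be a Borel probability measure on a second-countable topological space X, h : X → ℝ, and f : X × ℝ → ℝ. Define B = {(t̃, z) ∈ X × ℝ : μ({t ∈ X : h(t) = z and f(t, z) = f(t̃, z)}) = 0}, and define f₂ : X × ℝ → ℝ by f₂(t̃, z) = f(t̃, z) + 10·𝟙_B(t̃, z). Assume that for every t̃ in the topological support of μ, μ({t ∈ X : h(t) = h(t̃) and f(t, h(t)) = f(t̃, h(t̃))}) > 0. Then: (i) for every t̃ in the topological support of μ, (t̃, h(t̃)) ∉ B, hence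 f₂(t̃, h(t̃)) = f(t̃, h(t̃)); in particular f₂(t, h(t)) = f(t, h(t)) for μ-almost every t; and (ii) for every (t̃, z) ∈ B, f₂(t̃, z) = f(t̃, z) + 10 ≠ f(t̃, z). Thus if B is nonempty (Effect Connectivity fails), the outcome functions f and f₂ generate the same observed data (t, f(t, h(t))) μ-a.s. while their conditional effects differ on B. -/
open MeasureTheory

/-! By hypothesis every point `t̃` of the support has an observed level set
`{t | h t = h t̃ ∧ f t (h t) = f t̃ (h t̃)}` of positive mass, and on `{h t = h t̃}` this is the
set defining membership of `(t̃, h t̃)` in `B`; so the graph of `h` over the support avoids `B`,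
where `f₂ = f`. The support is conull in a second-countable space, hence `f₂ = f` on the
observed data almost surely, while on `B` the indicator adds exactly `10`. -/

namespace MeasureTheory.Measure

variable {X : Type*} [TopologicalSpace X] [MeasurableSpace X]

lemma mem_support_iff_forall_isOpen {μ : Measure X} {x : X} :
    x ∈ μ.support ↔ ∀ U : Set X, IsOpen U → x ∈ U → 0 < μ U :=
  (nhds_basis_opens x).mem_measureSupport.trans <| forall_congr' fun _ => and_imp.trans Imp.swap

end MeasureTheory.Measure

lemma setOf_eq_and_comp_eq {X Y Z : Type*} (h : X → Y) (f : X → Y → Z) (y : Y) (c : Z) :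
    {t | h t = y ∧ f t (h t) = c} = {t | h t = y ∧ f t y = c} :=
  Set.ext fun _ => and_congr_right fun ht => by rw [ht]

theorem effect_connectivity_necessary_general
    {X : Type*} [TopologicalSpace X] [SecondCountableTopology X]
    [MeasurableSpace X]
    (μ : Measure X)
    (h : X → ℝ) (f : X → ℝ → ℝ)
    (B : Set (X × ℝ))
    (hB : B = {p : X × ℝ | μ {t : X | h t = p.2 ∧ f t p.2 = f p.1 p.2} = 0})
    (f₂ : X → ℝ → ℝ)
    (hf₂ : ∀ t z, f₂ t z = f t z + Set.indicator B (fun _ => (10 : ℝ)) (t, z))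
    (hconn : ∀ t0 : X, (∀ U : Set X, IsOpen U → t0 ∈ U → 0 < μ U) →
      0 < μ {t : X | h t = h t0 ∧ f t (h t) = f t0 (h t0)}) :
    (∀ t0 : X, (∀ U : Set X, IsOpen U → t0 ∈ U → 0 < μ U) →
        (t0, h t0) ∉ B ∧ f₂ t0 (h t0) = f t0 (h t0)) ∧
    (∀ᵐ t ∂μ, f₂ t (h t) = f t (h t)) ∧
    (∀ p ∈ B, f₂ p.1 p.2 = f p.1 p.2 + 10 ∧ f₂ p.1 p.2 ≠ f p.1 p.2) := by
  have on_support : ∀ t0 ∈ μ.support, (t0, h t0) ∉ B ∧ f₂ t0 (h t0) = f t0 (h t0) := by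
    intro t0 ht0
    have hpos := hconn t0 (Measure.mem_support_iff_forall_isOpen.mp ht0)
    have hnotB : (t0, h t0) ∉ B := by
      rw [hB, Set.mem_ofPred_eq, ← setOf_eq_and_comp_eq]
      exact hpos.ne'
    exact ⟨hnotB, by rw [hf₂, Set.indicator_of_notMem hnotB, add_zero]⟩
  refine ⟨fun t0 ht0 => on_support t0 (Measure.mem_support_iff_forall_isOpen.mpr ht0), ?_, ?_⟩
  · filter_upwards [μ.support_mem_ae] with t ht
    exact (on_support t ht).2
  · intro p hp
    have hshift : f₂ p.1 p.2 = f p.1 p.2 + 10 := by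
      rw [hf₂, Set.indicator_of_mem hp]
    exact ⟨hshift, by rw [hshift]; norm_num⟩

/-- Necessity of Effect Connectivity (non-identifiability construction): with
`B` the set of intervention/confounder pairs violating Effect Connectivity and
`f₂ = f + 10·𝟙_B`, the modified outcome function `f₂` agrees with `f` on the observed
data (on the topological support of `μ`, hence `μ`-a.e.), while the conditional
effects of `f₂` and `f` differ on all of `B`. -/
theorem effect_connectivity_necessary
    {X : Type*} [TopologicalSpace X] [SecondCountableTopology X]
    [MeasurableSpace X] [BorelSpace X]
    (μ : Measure X) [IsProbabilityMeasure μ]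
    (h : X → ℝ) (f : X → ℝ → ℝ)
    (B : Set (X × ℝ))
    (hB : B = {p : X × ℝ | μ {t : X | h t = p.2 ∧ f t p.2 = f p.1 p.2} = 0})
    (f₂ : X → ℝ → ℝ)
    (hf₂ : ∀ t z, f₂ t z = f t z + Set.indicator B (fun _ => (10 : ℝ)) (t, z))
    (hconn : ∀ t0 : X, (∀ U : Set X, IsOpen U → t0 ∈ U → 0 < μ U) →
      0 < μ {t : X | h t = h t0 ∧ f t (h t) = f t0 (h t0)}) :
    (∀ t0 : X, (∀ U : Set X, IsOpen U → t0 ∈ U → 0 < μ U) →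
        (t0, h t0) ∉ B ∧ f₂ t0 (h t0) = f t0 (h t0)) ∧
    (∀ᵐ t ∂μ, f₂ t (h t) = f t (h t)) ∧
    (∀ p ∈ B, f₂ p.1 p.2 = f p.1 p.2 + 10 ∧ f₂ p.1 p.2 ≠ f p.1 p.2) :=
  effect_connectivity_necessary_general μ h f B hB f₂ hf₂ hconn
end
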